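/- For all real θ > 0, α > −1 and all x, y > 0, the limit kernel admits the integral representation 𝒦^{(α,θ)}(x,y) = θ ∫_0^1 J_{(α+1)/θ, 1/θ}(x t) · J_{α+1, θ}((y t)^θ) · t^α dt. -/
import Mathlib

open MeasureTheory

/-- The limit kernel `𝒦^{(α,θ)}(x,y)` of the biorthogonal Jacobi/Laguerre ensembles. -/
noncomputable def limitKernel (α θ x y : ℝ) : ℝ :=
  ∑' k : ℕ, ∑' l : ℕ,
    ((-1) ^ k * x ^ k / ((Nat.factorial k : ℝ) * Real.Gamma ((α + 1 + k) / θ))) *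
      ((-1) ^ l * y ^ (θ * (l : ℝ)) /
        ((Nat.factorial l : ℝ) * Real.Gamma (α + 1 + θ * l))) *
      (θ / (α + 1 + k + θ * l))

/-- Wright's generalized Bessel function `J_{a,b}(x) = ∑ (-x)^m / (m! Γ(a + b m))`. -/
noncomputable def wrightBessel (a b x : ℝ) : ℝ :=
  ∑' m : ℕ, (-x) ^ m / ((Nat.factorial m : ℝ) * Real.Gamma (a + b * m))

lemma gamma_ge_sixth {z : ℝ} (hz : 0 < z) : (1:ℝ)/6 ≤ Real.Gamma z := by
  rcases le_or_gt 2 z with h | h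
  · have h1 : Real.Gamma 2 ≤ Real.Gamma z :=
      Real.Gamma_strictMonoOn_Ici.monotoneOn (Set.mem_Ici.2 le_rfl) (Set.mem_Ici.2 h) h
    rw [Real.Gamma_two] at h1
    linarith
  · have h2 : Real.Gamma (z + 2) = (z + 1) * (z * Real.Gamma z) := by
      rw [show z + 2 = (z + 1) + 1 by ring, Real.Gamma_add_one (by linarith),
        Real.Gamma_add_one (ne_of_gt hz)]
    have h3 : Real.Gamma 2 ≤ Real.Gamma (z + 2) :=
      Real.Gamma_strictMonoOn_Ici.monotoneOn (Set.mem_Ici.2 le_rfl)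
        (Set.mem_Ici.2 (by linarith)) (by linarith)
    rw [Real.Gamma_two, h2] at h3
    have hg := Real.Gamma_pos_of_pos hz
    have h6 : (z + 1) * z ≤ 6 := by nlinarith
    have := mul_le_mul_of_nonneg_right h6 hg.le
    nlinarith

lemma summable_wright_aux (r c b : ℝ) (hr : 0 ≤ r) (hc : 0 < c) (hb : 0 < b) :
    Summable (fun k : ℕ => r ^ k / ((Nat.factorial k : ℝ) * Real.Gamma (c + b * k))) := by
  refine Summable.of_nonneg_of_le (fun k => ?_) (fun k => ?_)
    ((Real.summable_pow_div_factorial r).mul_left 6)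
  · have : (0:ℝ) < c + b * k := by positivity
    have := Real.Gamma_pos_of_pos this
    positivity
  · have hpos : (0:ℝ) < c + b * k := by positivity
    have hg := gamma_ge_sixth hpos
    have hgpos := Real.Gamma_pos_of_pos hpos
    have hfac : (0:ℝ) < (Nat.factorial k : ℝ) := by positivity
    rw [div_le_iff₀ (by positivity)]
    have : r ^ k * 1 ≤ r ^ k * (6 * Real.Gamma (c + b * k)) := by
      apply mul_le_mul_of_nonneg_left (by linarith) (by positivity)
    calc r ^ k = r ^ k * 1 := (mul_one _).symm
      _ ≤ r ^ k * (6 * Real.Gamma (c + b * k)) := this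
      _ = 6 * (r ^ k / (Nat.factorial k : ℝ)) * ((Nat.factorial k : ℝ) * Real.Gamma (c + b * k)) := by
          field_simp

lemma int_rpow_Ioo {e : ℝ} (he : -1 < e) :
    ∫ t in Set.Ioo (0:ℝ) 1, t ^ e = 1 / (e + 1) := by
  rw [← integral_Ioc_eq_integral_Ioo, ← intervalIntegral.integral_of_le zero_le_one,
    integral_rpow (Or.inl he), Real.one_rpow, Real.zero_rpow (by linarith)]
  ring

lemma integrableOn_rpow_Ioo {e : ℝ} (he : -1 < e) :
    IntegrableOn (fun t : ℝ => t ^ e) (Set.Ioo (0:ℝ) 1) volume := by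
  have := (intervalIntegral.intervalIntegrable_rpow' he (a := 0) (b := 1))
  rw [intervalIntegrable_iff_integrableOn_Ioc_of_le zero_le_one] at this
  exact this.mono_set Set.Ioo_subset_Ioc_self

/-- coefficient of the first Wright-Bessel series -/
noncomputable def wc1 (α θ x : ℝ) (k : ℕ) : ℝ :=
  (-1) ^ k * x ^ k / ((Nat.factorial k : ℝ) * Real.Gamma ((α + 1 + k) / θ))

/-- coefficient of the second Wright-Bessel series -/
noncomputable def wc2 (α θ y : ℝ) (l : ℕ) : ℝ :=
  (-1) ^ l * y ^ (θ * (l : ℝ)) / ((Nat.factorial l : ℝ) * Real.Gamma (α + 1 + θ * l))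

set_option maxHeartbeats 2000000 in
/-- **Integral representation of the limit kernel** via Wright's generalized
Bessel functions. -/
theorem limitKernel_integral_repr (θ α : ℝ) (hθ : 0 < θ) (hα : -1 < α)
    (x y : ℝ) (hx : 0 < x) (hy : 0 < y) :
    limitKernel α θ x y =
      θ * ∫ t in Set.Ioo (0 : ℝ) 1,
        wrightBessel ((α + 1) / θ) (1 / θ) (x * t) *
          wrightBessel (α + 1) θ ((y * t) ^ θ) * t ^ α := by
  have hα1 : (0:ℝ) < α + 1 := by linarith
  -- positivity of Gamma arguments
  have hg1 : ∀ k : ℕ, (0:ℝ) < (α + 1 + k) / θ := fun k => by positivity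
  have hg2 : ∀ l : ℕ, (0:ℝ) < α + 1 + θ * l := fun l => by positivity
  -- absolute values of coefficients
  have habs1 : ∀ k : ℕ, |wc1 α θ x k| =
      x ^ k / ((Nat.factorial k : ℝ) * Real.Gamma ((α + 1 + k) / θ)) := by
    intro k
    have hG := Real.Gamma_pos_of_pos (hg1 k)
    rw [wc1, abs_div]
    congr 1
    · rw [abs_mul, abs_pow, abs_pow, abs_neg, abs_one, one_pow, one_mul, abs_of_pos hx]
    · exact abs_of_pos (by positivity)
  have habs2 : ∀ l : ℕ, |wc2 α θ y l| =
      y ^ (θ * (l:ℝ)) / ((Nat.factorial l : ℝ) * Real.Gamma (α + 1 + θ * l)) := by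
    intro l
    have hG := Real.Gamma_pos_of_pos (hg2 l)
    have hyp : (0:ℝ) < y ^ (θ * (l:ℝ)) := Real.rpow_pos_of_pos hy _
    rw [wc2, abs_div]
    congr 1
    · rw [abs_mul, abs_pow, abs_neg, abs_one, one_pow, one_mul, abs_of_pos hyp]
    · exact abs_of_pos (by positivity)
  -- summability of |coefficients|
  have S1 : Summable (fun k : ℕ => x ^ k /
      ((Nat.factorial k : ℝ) * Real.Gamma ((α + 1 + k) / θ))) := by
    have h := summable_wright_aux x ((α + 1)/θ) (1/θ) hx.le (by positivity) (by positivity)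
    refine h.congr fun k => ?_
    congr 2
    field_simp
  have S2 : Summable (fun l : ℕ => y ^ (θ * (l:ℝ)) /
      ((Nat.factorial l : ℝ) * Real.Gamma (α + 1 + θ * l))) := by
    have h := summable_wright_aux (y ^ θ) (α + 1) θ (Real.rpow_pos_of_pos hy θ).le hα1 hθ
    refine h.congr fun l => ?_
    rw [← Real.rpow_natCast (y ^ θ) l, ← Real.rpow_mul hy.le]
  have Sprod : Summable (fun p : ℕ × ℕ =>
      (x ^ p.1 / ((Nat.factorial p.1 : ℝ) * Real.Gamma ((α + 1 + p.1) / θ))) *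
      (y ^ (θ * (p.2:ℝ)) / ((Nat.factorial p.2 : ℝ) * Real.Gamma (α + 1 + θ * p.2)))) := by
    refine S1.mul_of_nonneg S2 (fun k => ?_) (fun l => ?_)
    · have := Real.Gamma_pos_of_pos (hg1 k); positivity
    · have := Real.Gamma_pos_of_pos (hg2 l)
      have := Real.rpow_pos_of_pos hy (θ * (l:ℝ)); positivity
  -- the summand family
  set F : ℕ × ℕ → ℝ → ℝ := fun p t =>
    wc1 α θ x p.1 * wc2 α θ y p.2 * t ^ ((p.1:ℝ) + θ * p.2 + α) with hF
  have hexp : ∀ p : ℕ × ℕ, (-1:ℝ) < (p.1:ℝ) + θ * p.2 + α := fun p => by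
    have : (0:ℝ) ≤ (p.1:ℝ) + θ * p.2 := by positivity
    linarith
    -- integrability of each F p
  have hInt : ∀ p : ℕ × ℕ, IntegrableOn (F p) (Set.Ioo (0:ℝ) 1) volume := fun p =>
    (integrableOn_rpow_Ioo (hexp p)).const_mul _
  -- value of each integral
  have hIntEq : ∀ p : ℕ × ℕ, (∫ t in Set.Ioo (0:ℝ) 1, F p t) =
      wc1 α θ x p.1 * wc2 α θ y p.2 * (1 / ((p.1:ℝ) + θ * p.2 + α + 1)) := by
    intro p
    rw [hF]
    simp only
    rw [integral_const_mul, int_rpow_Ioo (hexp p)]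
  -- value of norm integrals
  have hNorm : ∀ p : ℕ × ℕ, (∫ t in Set.Ioo (0:ℝ) 1, ‖F p t‖) =
      |wc1 α θ x p.1 * wc2 α θ y p.2| * (1 / ((p.1:ℝ) + θ * p.2 + α + 1)) := by
    intro p
    rw [← int_rpow_Ioo (hexp p), ← integral_const_mul]
    refine setIntegral_congr_fun measurableSet_Ioo fun t ht => ?_
    rw [hF]
    simp only [Real.norm_eq_abs, abs_mul]
    rw [abs_of_pos (Real.rpow_pos_of_pos ht.1 _)]
  -- summability of norm integrals
  have hSumNorm : Summable (fun p : ℕ × ℕ => ∫ t in Set.Ioo (0:ℝ) 1, ‖F p t‖) := by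
    refine Summable.of_nonneg_of_le (fun p => ?_) (fun p => ?_) (Sprod.mul_right (1/(α+1)))
    · exact integral_nonneg fun t => norm_nonneg _
    · rw [hNorm p, abs_mul, habs1, habs2]
      refine mul_le_mul_of_nonneg_left ?_ ?_
      · apply one_div_le_one_div_of_le hα1
        have h0 : (0:ℝ) ≤ (p.1:ℝ) + θ * p.2 := by positivity
        linarith
      · have := Real.Gamma_pos_of_pos (hg1 p.1)
        have := Real.Gamma_pos_of_pos (hg2 p.2)
        have := Real.rpow_pos_of_pos hy (θ * (p.2:ℝ))
        positivity
  -- interchange of integral and sum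
  have hswap : (∫ t in Set.Ioo (0:ℝ) 1, (∑' p : ℕ × ℕ, F p t)) =
      ∑' p : ℕ × ℕ, ∫ t in Set.Ioo (0:ℝ) 1, F p t :=
    (integral_tsum_of_summable_integral_norm hInt hSumNorm).symm
  -- pointwise identity of the integrand
  have hptw : ∀ t ∈ Set.Ioo (0:ℝ) 1,
      wrightBessel ((α + 1) / θ) (1 / θ) (x * t) *
        wrightBessel (α + 1) θ ((y * t) ^ θ) * t ^ α = ∑' p : ℕ × ℕ, F p t := by
    intro t ht
    obtain ⟨ht0, ht1⟩ := ht
    have hyt : 0 < y * t := mul_pos hy ht0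
    have hW1 : wrightBessel ((α + 1) / θ) (1 / θ) (x * t)
        = ∑' k : ℕ, wc1 α θ x k * t ^ (k:ℝ) := by
      unfold wrightBessel
      refine tsum_congr fun k => ?_
      rw [show (α+1)/θ + 1/θ*(k:ℝ) = (α+1+(k:ℝ))/θ by field_simp]
      simp only [wc1]
      rw [Real.rpow_natCast, show -(x*t) = (-1)*(x*t) by ring, mul_pow, mul_pow]
      ring
    have hW2 : wrightBessel (α + 1) θ ((y * t) ^ θ)
        = ∑' l : ℕ, wc2 α θ y l * t ^ (θ * (l:ℝ)) := by
      unfold wrightBessel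
      refine tsum_congr fun l => ?_
      simp only [wc2]
      rw [show -((y*t)^θ) = (-1)*((y*t)^θ) by ring, mul_pow,
        ← Real.rpow_natCast ((y*t)^θ) l, ← Real.rpow_mul hyt.le,
        Real.mul_rpow hy.le ht0.le]
      ring
    have hS1t : Summable fun k : ℕ => ‖wc1 α θ x k * t ^ (k:ℝ)‖ := by
      refine Summable.of_nonneg_of_le (fun k => norm_nonneg _) (fun k => ?_) S1
      rw [Real.norm_eq_abs, abs_mul, habs1]
      have h1 : |t ^ (k:ℝ)| ≤ 1 := by
        rw [abs_of_pos (Real.rpow_pos_of_pos ht0 _)]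
        exact Real.rpow_le_one ht0.le ht1.le (Nat.cast_nonneg k)
      have h0 : (0:ℝ) ≤ x ^ k / ((Nat.factorial k : ℝ) * Real.Gamma ((α + 1 + k) / θ)) := by
        have := Real.Gamma_pos_of_pos (hg1 k); positivity
      calc x ^ k / ((Nat.factorial k : ℝ) * Real.Gamma ((α + 1 + k) / θ)) * |t ^ (k:ℝ)|
          ≤ x ^ k / ((Nat.factorial k : ℝ) * Real.Gamma ((α + 1 + k) / θ)) * 1 :=
            mul_le_mul_of_nonneg_left h1 h0
        _ = x ^ k / ((Nat.factorial k : ℝ) * Real.Gamma ((α + 1 + k) / θ)) := mul_one _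
    have hS2t : Summable fun l : ℕ => ‖wc2 α θ y l * t ^ (θ * (l:ℝ))‖ := by
      refine Summable.of_nonneg_of_le (fun l => norm_nonneg _) (fun l => ?_) S2
      rw [Real.norm_eq_abs, abs_mul, habs2]
      have h1 : |t ^ (θ * (l:ℝ))| ≤ 1 := by
        rw [abs_of_pos (Real.rpow_pos_of_pos ht0 _)]
        exact Real.rpow_le_one ht0.le ht1.le (by positivity)
      have h0 : (0:ℝ) ≤ y ^ (θ * (l:ℝ)) / ((Nat.factorial l : ℝ) * Real.Gamma (α + 1 + θ * l)) := by
        have := Real.Gamma_pos_of_pos (hg2 l)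
        have := Real.rpow_pos_of_pos hy (θ * (l:ℝ))
        positivity
      calc y ^ (θ * (l:ℝ)) / ((Nat.factorial l : ℝ) * Real.Gamma (α + 1 + θ * l)) * |t ^ (θ * (l:ℝ))|
          ≤ y ^ (θ * (l:ℝ)) / ((Nat.factorial l : ℝ) * Real.Gamma (α + 1 + θ * l)) * 1 :=
            mul_le_mul_of_nonneg_left h1 h0
        _ = y ^ (θ * (l:ℝ)) / ((Nat.factorial l : ℝ) * Real.Gamma (α + 1 + θ * l)) := mul_one _
    rw [hW1, hW2, tsum_mul_tsum_of_summable_norm hS1t hS2t, ← tsum_mul_right]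
    refine tsum_congr fun p => ?_
    rw [hF]
    simp only
    rw [Real.rpow_add ht0, Real.rpow_add ht0]
    ring
  -- summability of the kernel terms over pairs
  have hkerabs : Summable (fun p : ℕ × ℕ =>
      |wc1 α θ x p.1 * wc2 α θ y p.2 * (θ / (α + 1 + p.1 + θ * p.2))|) := by
    refine Summable.of_nonneg_of_le (fun p => abs_nonneg _) (fun p => ?_) (Sprod.mul_right (θ/(α+1)))
    rw [abs_mul, abs_mul, habs1, habs2]
    have hd : (0:ℝ) < α + 1 + p.1 + θ * p.2 := by
      have h0 : (0:ℝ) ≤ (p.1:ℝ) + θ * p.2 := by positivity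
      linarith
    rw [abs_of_pos (div_pos hθ hd)]
    have hle : θ / (α + 1 + ↑p.1 + θ * ↑p.2) ≤ θ / (α + 1) := by
      rw [div_eq_mul_one_div θ (α + 1 + ↑p.1 + θ * ↑p.2), div_eq_mul_one_div θ (α+1)]
      exact mul_le_mul_of_nonneg_left (one_div_le_one_div_of_le hα1 (by
        have h0 : (0:ℝ) ≤ (p.1:ℝ) + θ * p.2 := by positivity
        linarith)) hθ.le
    refine mul_le_mul_of_nonneg_left hle ?_
    have hG1 := Real.Gamma_pos_of_pos (hg1 p.1)
    have hG2 := Real.Gamma_pos_of_pos (hg2 p.2)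
    have hY := Real.rpow_pos_of_pos hy (θ * (p.2:ℝ))
    have hf1 : (0:ℝ) < (Nat.factorial p.1 : ℝ) := by positivity
    have hf2 : (0:ℝ) < (Nat.factorial p.2 : ℝ) := by positivity
    exact mul_nonneg (div_nonneg (pow_nonneg hx.le _) (mul_nonneg hf1.le hG1.le))
      (div_nonneg hY.le (mul_nonneg hf2.le hG2.le))
  have hker : Summable (fun p : ℕ × ℕ =>
      wc1 α θ x p.1 * wc2 α θ y p.2 * (θ / (α + 1 + p.1 + θ * p.2))) := hkerabs.of_abs
  have hkprod : limitKernel α θ x y = ∑' p : ℕ × ℕ,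
      wc1 α θ x p.1 * wc2 α θ y p.2 * (θ / (α + 1 + p.1 + θ * p.2)) := by
    rw [Summable.tsum_prod hker]
    simp only [limitKernel, wc1, wc2]
  calc limitKernel α θ x y
      = ∑' p : ℕ × ℕ, wc1 α θ x p.1 * wc2 α θ y p.2 * (θ / (α + 1 + p.1 + θ * p.2)) := hkprod
    _ = θ * ∑' p : ℕ × ℕ, wc1 α θ x p.1 * wc2 α θ y p.2 * (1 / ((p.1:ℝ) + θ * p.2 + α + 1)) := by
        rw [← tsum_mul_left]
        refine tsum_congr fun p => ?_
        rw [show α + 1 + (p.1:ℝ) + θ * p.2 = (p.1:ℝ) + θ * p.2 + α + 1 by ring]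
        ring
    _ = θ * ∑' p : ℕ × ℕ, ∫ t in Set.Ioo (0:ℝ) 1, F p t := by
        congr 1
        exact tsum_congr fun p => (hIntEq p).symm
    _ = θ * ∫ t in Set.Ioo (0:ℝ) 1, (∑' p : ℕ × ℕ, F p t) := by rw [hswap]
    _ = θ * ∫ t in Set.Ioo (0 : ℝ) 1,
        wrightBessel ((α + 1) / θ) (1 / θ) (x * t) *
          wrightBessel (α + 1) θ ((y * t) ^ θ) * t ^ α := by
        congr 1
        exact setIntegral_congr_fun measurableSet_Ioo fun t ht => (hptw t ht).symm
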